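/- Endpoint values of F_{lm}: for all integers l ≥ 1 and −l ≤ m ≤ l, the limit of F_{lm}(x) as x → 1⁻ equals c_{l,0} = √((2l+1)/2) if m = 1 and equals 0 otherwise, and the limit of F_{lm}(x) as x → −1⁺ equals (−1)^{l−1} c_{l,0} if m = −1 and equals 0 otherwise. -/

import Mathlib

open MeasureTheory

/-- The (unnormalized) associated Legendre function
`P_l^m(x) = ((−1)^m / (2^l l!)) (1 − x^2)^{m/2} (d/dx)^{l+m} (x^2 − 1)^l`. -/
noncomputable def Plm (l m : ℤ) (x : ℝ) : ℝ :=
  ((-1 : ℝ) ^ m / ((2 : ℝ) ^ l * (l.toNat.factorial : ℝ))) *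
    (1 - x ^ 2) ^ ((m : ℝ) / 2) *
    iteratedDeriv (l + m).toNat (fun y : ℝ => (y ^ 2 - 1) ^ l) x

/-- The normalization factor `c_{lm} = √((2l+1)/2 · (l−m)!/(l+m)!)`. -/
noncomputable def clm (l m : ℤ) : ℝ :=
  Real.sqrt ((2 * (l : ℝ) + 1) / 2 * ((l - m).toNat.factorial : ℝ) /
    ((l + m).toNat.factorial : ℝ))

/-- The normalized associated Legendre function `U_{lm} = c_{lm} P_l^m`,
with the convention `U_{lm} = 0` when `|m| > l`. -/
noncomputable def Ulm (l m : ℤ) (x : ℝ) : ℝ :=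
  if |m| ≤ l then clm l m * Plm l m x else 0

/-- The function of Sheppard and Török
`F_{lm}(x) = (1/√(l(l+1))) [√(1−x²) U_{lm}'(x) − (m/√(1−x²)) U_{lm}(x)]`. -/
noncomputable def Flm (l m : ℤ) (x : ℝ) : ℝ :=
  (1 / Real.sqrt ((l : ℝ) * ((l : ℝ) + 1))) *
    (Real.sqrt (1 - x ^ 2) * deriv (Ulm l m) x -
      ((m : ℝ) / Real.sqrt (1 - x ^ 2)) * Ulm l m x)

/-!
Write `P = (X - 1)ˡ (X + 1)ˡ` and `Q = P⁽ˡ⁺ᵐ⁾`. On `(-1, 1)` the product rule gives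
`F_{lm} = K (1 - x²)^((m - 1)/2) ((1 - x²) Q' - m (1 + x) Q)`. Near either endpoint this is
`(1 - x)^a (1 + x)^b` times a polynomial, with a nonnegative exponent at that endpoint: when
`m ≤ 0` (at `1`) or `m < 0` (at `-1`), `Q` keeps the factor `(X ∓ 1)^(-m)` of `P`; otherwise
`(m - 1)/2 ≥ 0`, resp. the bracket is divisible by `1 + X`. So the limit is `0` unless that
exponent vanishes, i.e. `m = 1` at `1` or `m = -1` at `-1`, where Leibniz's rule evaluates
`Q(1)`, resp. `Q'(-1)`.
-/

open Polynomial Filter Topology Set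
open scoped Nat

theorem Polynomial.iteratedDeriv_eval {𝕜 : Type*} [NontriviallyNormedField 𝕜] (p : 𝕜[X])
    (k : ℕ) :
    iteratedDeriv k (fun x => p.eval x) = fun x => (derivative^[k] p).eval x := by
  induction k generalizing p with
  | zero => simp
  | succ k ih =>
    rw [iteratedDeriv_succ', Function.iterate_succ_apply, ← ih]
    congr 1
    funext x
    exact Polynomial.deriv p

theorem Polynomial.eval_iterate_derivative_X_sub_C_pow_mul {R : Type*} [CommRing R]
    (a : R) (q : R[X]) (n j : ℕ) :
    (derivative^[n + j] ((X - C a) ^ n * q)).eval a =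
      (n + j).choose j * n ! * (derivative^[j] q).eval a := by
  rw [iterate_derivative_mul, eval_finsetSum,
    Finset.sum_eq_single_of_mem j (Finset.mem_range.mpr (by omega))]
  · rw [Nat.add_sub_cancel, iterate_derivative_X_sub_pow_self, nsmul_eq_mul, eval_mul, eval_mul,
      eval_natCast, eval_natCast]
    ring
  · intro i hi hij
    rw [iterate_derivative_X_sub_pow, eval_smul, eval_mul, eval_smul, eval_pow, eval_sub, eval_X,
      eval_C, sub_self]
    have hi := Finset.mem_range.mp hi
    rcases lt_or_gt_of_ne hij with h | h
    · rw [Nat.descFactorial_eq_zero_iff_lt.mpr (by omega), zero_smul, zero_mul, smul_zero]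
    · rw [zero_pow (by omega), smul_zero, zero_mul, smul_zero]

theorem Polynomial.X_sub_C_mul_derivative_X_sub_C_pow_mul {R : Type*} [CommRing R]
    (c : R) (p : ℕ) (r : R[X]) :
    (X - C c) * derivative ((X - C c) ^ p * r) =
      (X - C c) ^ p * (C (p : R) * r + (X - C c) * derivative r) := by
  rcases p with _ | p
  · simp
  · rw [derivative_mul, derivative_X_sub_C_pow, Nat.add_sub_cancel]
    ring

theorem one_sub_sq_rpow_mul {x : ℝ} (hx : x ∈ Ioo (-1) 1) (e : ℝ) (i j : ℕ) :
    (1 - x ^ 2) ^ e * ((1 - x) ^ i * (1 + x) ^ j) = (1 - x) ^ (e + i) * (1 + x) ^ (e + j) := by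
  have h₁ : 0 < 1 - x := by linarith [hx.2]
  have h₂ : 0 < 1 + x := by linarith [hx.1]
  rw [show 1 - x ^ 2 = (1 - x) * (1 + x) by ring, Real.mul_rpow h₁.le h₂.le, Real.rpow_add h₁,
    Real.rpow_add h₂, Real.rpow_natCast, Real.rpow_natCast]
  ring

theorem tendsto_nhdsLT_one_of_eqOn {f c : ℝ → ℝ} {a b : ℝ} (ha : 0 ≤ a)
    (hc : ContinuousAt c 1)
    (hf : EqOn f (fun x => (1 - x) ^ a * (1 + x) ^ b * c x) (Ioo (-1) 1)) :
    Tendsto f (𝓝[<] 1) (𝓝 ((0 : ℝ) ^ a * 2 ^ b * c 1)) := by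
  have hcont : ContinuousAt (fun x : ℝ => (1 - x) ^ a * (1 + x) ^ b * c x) 1 :=
    (((continuousAt_const.sub continuousAt_id).rpow_const (Or.inr ha)).mul
      ((continuousAt_const.add continuousAt_id).rpow_const (Or.inl (by norm_num)))).mul hc
  have hev : f =ᶠ[𝓝[<] 1] fun x => (1 - x) ^ a * (1 + x) ^ b * c x :=
    eventuallyEq_of_mem (Ioo_mem_nhdsLT (by norm_num)) hf
  convert (hcont.tendsto.mono_left nhdsWithin_le_nhds).congr' hev.symm using 2
  norm_num

theorem tendsto_nhdsGT_neg_one_of_eqOn {f c : ℝ → ℝ} {a b : ℝ} (hb : 0 ≤ b)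
    (hc : ContinuousAt c (-1))
    (hf : EqOn f (fun x => (1 - x) ^ a * (1 + x) ^ b * c x) (Ioo (-1) 1)) :
    Tendsto f (𝓝[>] (-1)) (𝓝 ((2 : ℝ) ^ a * 0 ^ b * c (-1))) := by
  have hcont : ContinuousAt (fun x : ℝ => (1 - x) ^ a * (1 + x) ^ b * c x) (-1) :=
    (((continuousAt_const.sub continuousAt_id).rpow_const (Or.inl (by norm_num))).mul
      ((continuousAt_const.add continuousAt_id).rpow_const (Or.inr hb))).mul hc
  have hev : f =ᶠ[𝓝[>] (-1)] fun x => (1 - x) ^ a * (1 + x) ^ b * c x :=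
    eventuallyEq_of_mem (Ioo_mem_nhdsGT (by norm_num)) hf
  convert (hcont.tendsto.mono_left nhdsWithin_le_nhds).congr' hev.symm using 2
  norm_num

noncomputable def rodriguesPoly (n : ℕ) : ℝ[X] := (X - C 1) ^ n * (X - C (-1)) ^ n

noncomputable def rodriguesDeriv (n : ℕ) (m : ℤ) : ℝ[X] :=
  derivative^[(n + m).toNat] (rodriguesPoly n)

noncomputable def flmConst (n : ℕ) (m : ℤ) : ℝ :=
  clm n m * (-1) ^ m / (2 ^ n * n ! * √(n * (n + 1)))

noncomputable def flmBracket (n : ℕ) (m : ℤ) : ℝ[X] :=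
  (1 - X ^ 2) * derivative (rodriguesDeriv n m) - C (m : ℝ) * (1 + X) * rodriguesDeriv n m

theorem eval_rodriguesPoly (n : ℕ) (x : ℝ) : (rodriguesPoly n).eval x = (x ^ 2 - 1) ^ n := by
  simp only [rodriguesPoly, eval_mul, eval_pow, eval_sub, eval_X, eval_C, ← mul_pow]
  ring

theorem X_sub_C_pow_dvd_rodriguesDeriv {n p : ℕ} (hp : p ≤ n) {c : ℝ}
    (hc : c = 1 ∨ c = -1) :
    (X - C c) ^ p ∣ rodriguesDeriv n (-p) := by
  have hP : (X - C c) ^ n ∣ rodriguesPoly n := by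
    rcases hc with rfl | rfl
    · exact dvd_mul_right _ _
    · exact dvd_mul_left _ _
  have := pow_sub_dvd_iterate_derivative_of_pow_dvd ((n : ℤ) + -(p : ℤ)).toNat hP
  rwa [show n - ((n : ℤ) + -(p : ℤ)).toNat = p by omega] at this

theorem flmBracket_eq_one_add_X_mul (n : ℕ) (m : ℤ) :
    flmBracket n m = (1 + X) * ((1 - X) * derivative (rodriguesDeriv n m) -
      C (m : ℝ) * rodriguesDeriv n m) := by
  rw [flmBracket]
  ring

theorem flmBracket_of_eq_X_sub_one_pow_mul {n p : ℕ} {r : ℝ[X]}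
    (hr : rodriguesDeriv n (-p) = (X - C 1) ^ p * r) :
    flmBracket n (-p) = (X - C 1) ^ p * ((1 - X ^ 2) * derivative r) := by
  have h := X_sub_C_mul_derivative_X_sub_C_pow_mul 1 p r
  rw [flmBracket, hr]
  simp only [map_one, Int.cast_neg, Int.cast_natCast, map_neg] at h ⊢
  linear_combination (-(X + 1)) * h

theorem flmBracket_of_eq_X_add_one_pow_mul {n p : ℕ} {r : ℝ[X]}
    (hr : rodriguesDeriv n (-p) = (X - C (-1)) ^ p * r) :
    flmBracket n (-p) = (X - C (-1)) ^ p * (C (2 * p : ℝ) * r + (1 - X ^ 2) * derivative r) := by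
  have h := X_sub_C_mul_derivative_X_sub_C_pow_mul (-1) p r
  rw [flmBracket, hr]
  simp only [map_one, Int.cast_neg, Int.cast_natCast, map_neg, map_mul, map_ofNat] at h ⊢
  linear_combination (1 - X) * h

theorem eval_one_iterate_derivative_succ_rodriguesPoly (n : ℕ) :
    (derivative^[n + 1] (rodriguesPoly n)).eval 1 = (n + 1)! * n * 2 ^ (n - 1) := by
  rw [rodriguesPoly, eval_iterate_derivative_X_sub_C_pow_mul, Function.iterate_one,
    derivative_X_sub_C_pow]
  simp only [eval_mul, eval_pow, eval_sub, eval_X, eval_C, Nat.choose_one_right,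
    Nat.factorial_succ]
  push_cast
  ring

theorem eval_neg_one_iterate_derivative_rodriguesPoly (n : ℕ) :
    (derivative^[n] (rodriguesPoly n)).eval (-1) = n ! * (-2) ^ n := by
  have h := eval_iterate_derivative_X_sub_C_pow_mul (-1 : ℝ) ((X - C 1) ^ n) n 0
  simp only [add_zero, Nat.choose_zero_right, Function.iterate_zero, id_eq, eval_pow, eval_sub,
    eval_X, eval_C] at h
  rw [rodriguesPoly, mul_comm, h]
  norm_num

theorem clm_zero (l : ℤ) : clm l 0 = √((2 * l + 1) / 2) := by
  rw [clm, sub_zero, add_zero, mul_div_assoc, div_self (by positivity), mul_one]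

theorem clm_one {n : ℕ} (hn : 1 ≤ n) : clm n 1 = clm n 0 / √(n * (n + 1)) := by
  obtain ⟨N, rfl⟩ := Nat.exists_eq_add_of_le' hn
  rw [clm, clm_zero, ← Real.sqrt_div' _ (by positivity),
    show ((N + 1 : ℕ) - 1 : ℤ).toNat = N by omega,
    show ((N + 1 : ℕ) + 1 : ℤ).toNat = N + 2 by omega,
    Nat.factorial_succ, Nat.factorial_succ]
  congr 1
  push_cast
  field_simp

theorem clm_neg_one {n : ℕ} (hn : 1 ≤ n) : clm n (-1) = clm n 0 * √(n * (n + 1)) := by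
  obtain ⟨N, rfl⟩ := Nat.exists_eq_add_of_le' hn
  rw [clm, clm_zero, ← Real.sqrt_mul' _ (by positivity),
    show ((N + 1 : ℕ) - -1 : ℤ).toNat = N + 2 by omega,
    show ((N + 1 : ℕ) + -1 : ℤ).toNat = N by omega, Nat.factorial_succ, Nat.factorial_succ]
  congr 1
  push_cast
  field_simp

theorem flmConst_one_mul_eval_one_flmBracket {n : ℕ} (hn : 1 ≤ n) :
    flmConst n 1 * (flmBracket n 1).eval 1 = clm n 0 := by
  have hQ : (rodriguesDeriv n 1).eval 1 = (n + 1)! * n * 2 ^ (n - 1) := by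
    rw [rodriguesDeriv, show ((n : ℤ) + 1).toNat = n + 1 by omega,
      eval_one_iterate_derivative_succ_rodriguesPoly]
  have hs : √((n : ℝ) * (n + 1)) ^ 2 = n * (n + 1) := Real.sq_sqrt (by positivity)
  obtain ⟨N, rfl⟩ := Nat.exists_eq_add_of_le' hn
  simp only [flmBracket, eval_sub, eval_mul, eval_one, eval_pow, eval_X, eval_C, eval_add, hQ]
  rw [flmConst, clm_one hn, Nat.factorial_succ, Nat.add_sub_cancel, pow_succ]
  field_simp
  rw [hs]
  push_cast [Nat.factorial_succ]
  ring

theorem flmConst_neg_one_mul_eval_neg_one {n : ℕ} (hn : 1 ≤ n) {r : ℝ[X]}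
    (hr : rodriguesDeriv n (-1) = (X - C (-1)) ^ 1 * r) :
    flmConst n (-1) * (C (2 * 1 : ℝ) * r + (1 - X ^ 2) * derivative r).eval (-1) =
      2 * ((-1) ^ ((n : ℤ) - 1) * clm n 0) := by
  have hr1 : r.eval (-1) = n ! * (-2) ^ n := by
    have h := eval_iterate_derivative_X_sub_C_pow_mul (-1 : ℝ) r 1 0
    rw [add_zero, ← hr, rodriguesDeriv, ← Function.iterate_add_apply,
      show 1 + ((n : ℤ) + -1).toNat = n by omega,
      eval_neg_one_iterate_derivative_rodriguesPoly] at h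
    simpa using h.symm
  simp only [eval_add, eval_mul, eval_C, eval_sub, eval_one, eval_pow, eval_X, hr1]
  rw [flmConst, clm_neg_one hn, zpow_sub₀ (by norm_num), zpow_natCast, zpow_neg_one, zpow_one,
    neg_pow (2 : ℝ)]
  field_simp
  ring

theorem Ulm_natCast_eq (n : ℕ) {m : ℤ} (hm : |m| ≤ n) :
    Ulm n m = fun x => clm n m * (-1) ^ m / (2 ^ n * n !) *
      ((1 - x ^ 2) ^ ((m : ℝ) / 2) * (rodriguesDeriv n m).eval x) := by
  have hP : (fun y : ℝ => (y ^ 2 - 1) ^ (n : ℤ)) = fun y => (rodriguesPoly n).eval y := by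
    simp only [zpow_natCast, eval_rodriguesPoly]
  funext x
  rw [Ulm, if_pos hm, Plm, hP, iteratedDeriv_eval, rodriguesDeriv]
  simp only [zpow_natCast, Int.toNat_natCast]
  ring

theorem Flm_natCast_eq {n : ℕ} {m : ℤ} (hm : |m| ≤ n) {x : ℝ} (hx : x ∈ Ioo (-1) 1) :
    Flm n m x = flmConst n m * ((1 - x ^ 2) ^ (((m : ℝ) - 1) / 2) * (flmBracket n m).eval x) := by
  set Q := rodriguesDeriv n m
  have hs : 0 < 1 - x ^ 2 := by nlinarith [hx.1, hx.2]
  have hU : HasDerivAt (Ulm n m) (clm n m * (-1) ^ m / (2 ^ n * n !) *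
      ((-(2 * x) * ((m : ℝ) / 2) * (1 - x ^ 2) ^ ((m : ℝ) / 2 - 1)) * Q.eval x +
        (1 - x ^ 2) ^ ((m : ℝ) / 2) * (derivative Q).eval x)) x := by
    rw [Ulm_natCast_eq n hm]
    have hbase : HasDerivAt (fun y : ℝ => 1 - y ^ 2) (-(2 * x)) x := by
      simpa using (hasDerivAt_pow 2 x).const_sub 1
    exact ((hbase.rpow_const (Or.inl hs.ne')).mul (Q.hasDerivAt x)).const_mul _
  have ht : 0 < √(1 - x ^ 2) := Real.sqrt_pos.mpr hs
  have hhalf : (1 - x ^ 2) ^ ((m : ℝ) / 2) =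
      (1 - x ^ 2) ^ (((m : ℝ) - 1) / 2) * √(1 - x ^ 2) := by
    rw [Real.sqrt_eq_rpow, ← Real.rpow_add hs]
    ring_nf
  have hhalf' : (1 - x ^ 2) ^ ((m : ℝ) / 2 - 1) =
      (1 - x ^ 2) ^ (((m : ℝ) - 1) / 2) / √(1 - x ^ 2) := by
    rw [Real.sqrt_eq_rpow, ← Real.rpow_sub hs]
    ring_nf
  rw [Flm, hU.deriv, Ulm_natCast_eq n hm]
  beta_reduce
  rw [flmConst, flmBracket, hhalf, hhalf']
  simp only [eval_sub, eval_mul, eval_pow, eval_X, eval_one, eval_add, eval_C, Int.cast_natCast]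
  field_simp
  rw [Real.sq_sqrt hs.le]
  ring

theorem Flm_eqOn_flmBracket {n : ℕ} {m : ℤ} (hm : |m| ≤ n) :
    EqOn (Flm n m) (fun x => (1 - x) ^ (((m : ℝ) - 1) / 2) * (1 + x) ^ (((m : ℝ) - 1) / 2) *
      (flmConst n m * (flmBracket n m).eval x)) (Ioo (-1) 1) := by
  intro x hx
  have h := one_sub_sq_rpow_mul hx (((m : ℝ) - 1) / 2) 0 0
  simp only [pow_zero, mul_one, Nat.cast_zero, add_zero] at h
  rw [Flm_natCast_eq hm hx, h]
  ring

theorem Flm_eqOn_one_add_X_mul {n : ℕ} {m : ℤ} (hm : |m| ≤ n) :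
    EqOn (Flm n m) (fun x => (1 - x) ^ (((m : ℝ) - 1) / 2) * (1 + x) ^ (((m : ℝ) + 1) / 2) *
      (flmConst n m * ((1 - X) * derivative (rodriguesDeriv n m) -
        C (m : ℝ) * rodriguesDeriv n m).eval x)) (Ioo (-1) 1) := by
  intro x hx
  have h := one_sub_sq_rpow_mul hx (((m : ℝ) - 1) / 2) 0 1
  rw [Flm_natCast_eq hm hx, flmBracket_eq_one_add_X_mul, eval_mul]
  calc _ = flmConst n m * ((1 - X) * derivative (rodriguesDeriv n m) -
        C (m : ℝ) * rodriguesDeriv n m).eval x *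
        ((1 - x ^ 2) ^ (((m : ℝ) - 1) / 2) * ((1 - x) ^ 0 * (1 + x) ^ 1)) := by
        simp only [eval_add, eval_one, eval_X]
        ring
    _ = _ := by
        rw [h]
        ring_nf

theorem Flm_eqOn_of_X_sub_one_pow_mul {n p : ℕ} (hp : p ≤ n) {r : ℝ[X]}
    (hr : rodriguesDeriv n (-p) = (X - C 1) ^ p * r) :
    EqOn (Flm n (-p)) (fun x => (1 - x) ^ (((p : ℝ) + 1) / 2) * (1 + x) ^ ((1 - (p : ℝ)) / 2) *
      (flmConst n (-p) * (-1) ^ p * (derivative r).eval x)) (Ioo (-1) 1) := by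
  intro x hx
  have h := one_sub_sq_rpow_mul hx ((((-p : ℤ) : ℝ) - 1) / 2) (p + 1) 1
  rw [Flm_natCast_eq (by simpa using hp) hx, flmBracket_of_eq_X_sub_one_pow_mul hr]
  calc _ = flmConst n (-p) * (-1) ^ p * (derivative r).eval x *
        ((1 - x ^ 2) ^ ((((-p : ℤ) : ℝ) - 1) / 2) * ((1 - x) ^ (p + 1) * (1 + x) ^ 1)) := by
        simp only [eval_mul, eval_pow, eval_sub, eval_X, eval_C, eval_one]
        rw [show x - 1 = -(1 - x) by ring, neg_pow]
        ring
    _ = _ := by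
        rw [h]
        push_cast
        ring_nf

theorem Flm_eqOn_of_X_add_one_pow_mul {n p : ℕ} (hp : p ≤ n) {r : ℝ[X]}
    (hr : rodriguesDeriv n (-p) = (X - C (-1)) ^ p * r) :
    EqOn (Flm n (-p)) (fun x => (1 - x) ^ ((-(p : ℝ) - 1) / 2) * (1 + x) ^ (((p : ℝ) - 1) / 2) *
      (flmConst n (-p) * (C (2 * p : ℝ) * r + (1 - X ^ 2) * derivative r).eval x))
      (Ioo (-1) 1) := by
  intro x hx
  have h := one_sub_sq_rpow_mul hx ((((-p : ℤ) : ℝ) - 1) / 2) 0 p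
  rw [Flm_natCast_eq (by simpa using hp) hx, flmBracket_of_eq_X_add_one_pow_mul hr, eval_mul]
  calc _ = flmConst n (-p) * (C (2 * p : ℝ) * r + (1 - X ^ 2) * derivative r).eval x *
        ((1 - x ^ 2) ^ ((((-p : ℤ) : ℝ) - 1) / 2) * ((1 - x) ^ 0 * (1 + x) ^ p)) := by
        simp only [eval_pow, eval_sub, eval_X, eval_C]
        ring
    _ = _ := by
        rw [h]
        push_cast
        ring_nf

theorem tendsto_Flm_nhdsLT_one {n : ℕ} (hn : 1 ≤ n) {m : ℤ} (hm : |m| ≤ n) :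
    Tendsto (Flm n m) (𝓝[<] 1) (𝓝 (if m = 1 then clm n 0 else 0)) := by
  obtain ⟨hm₁, hm₂⟩ := abs_le.mp hm
  rcases le_or_gt m 0 with hm0 | hm0
  · obtain ⟨p, rfl⟩ : ∃ p : ℕ, m = -p := ⟨m.natAbs, by omega⟩
    have hp : p ≤ n := by omega
    obtain ⟨r, hr⟩ := X_sub_C_pow_dvd_rodriguesDeriv hp (Or.inl rfl)
    have h := tendsto_nhdsLT_one_of_eqOn (by positivity) (by fun_prop)
      (Flm_eqOn_of_X_sub_one_pow_mul hp hr)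
    rw [if_neg (by omega)]
    rwa [Real.zero_rpow (by positivity), zero_mul, zero_mul] at h
  · have hm1 : (1 : ℝ) ≤ m := by exact_mod_cast hm0
    have h := tendsto_nhdsLT_one_of_eqOn (by linarith) (by fun_prop) (Flm_eqOn_flmBracket hm)
    rcases (show m = 1 ∨ 2 ≤ m by omega) with rfl | hm2
    · rw [if_pos rfl, ← flmConst_one_mul_eval_one_flmBracket hn]
      simpa using h
    · have hpos : 0 < ((m : ℝ) - 1) / 2 := by
        have : (2 : ℝ) ≤ m := by exact_mod_cast hm2
        linarith
      rw [if_neg (by omega)]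
      rwa [Real.zero_rpow hpos.ne', zero_mul, zero_mul] at h

theorem tendsto_Flm_nhdsGT_neg_one {n : ℕ} (hn : 1 ≤ n) {m : ℤ} (hm : |m| ≤ n) :
    Tendsto (Flm n m) (𝓝[>] (-1))
      (𝓝 (if m = -1 then (-1) ^ ((n : ℤ) - 1) * clm n 0 else 0)) := by
  obtain ⟨hm₁, hm₂⟩ := abs_le.mp hm
  rcases le_or_gt 0 m with hm0 | hm0
  · have hm0' : (0 : ℝ) ≤ m := by exact_mod_cast hm0
    have h := tendsto_nhdsGT_neg_one_of_eqOn (by linarith) (by fun_prop)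
      (Flm_eqOn_one_add_X_mul hm)
    rw [if_neg (by omega)]
    rwa [Real.zero_rpow (by linarith), mul_zero, zero_mul] at h
  · obtain ⟨p, rfl⟩ : ∃ p : ℕ, m = -p := ⟨m.natAbs, by omega⟩
    have hp : p ≤ n := by omega
    obtain ⟨r, hr⟩ := X_sub_C_pow_dvd_rodriguesDeriv hp (Or.inr rfl)
    have hp1 : (1 : ℝ) ≤ p := by exact_mod_cast (show 1 ≤ p by omega)
    have h := tendsto_nhdsGT_neg_one_of_eqOn (by linarith) (by fun_prop)
      (Flm_eqOn_of_X_add_one_pow_mul hp hr)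
    rcases (show p = 1 ∨ 2 ≤ p by omega) with rfl | hp2
    · simp only [Nat.cast_one, if_true] at h hr ⊢
      convert h using 2
      rw [flmConst_neg_one_mul_eval_neg_one hn hr]
      norm_num
      ring
    · have hpos : 0 < ((p : ℝ) - 1) / 2 := by
        have : (2 : ℝ) ≤ p := by exact_mod_cast hp2
        linarith
      rw [if_neg (by omega)]
      rwa [Real.zero_rpow hpos.ne', mul_zero, zero_mul] at h

/-- Endpoint values of `F_{lm}`: as `x → 1⁻` the limit is `c_{l,0} = √((2l+1)/2)`
when `m = 1` and `0` otherwise, and as `x → −1⁺` the limit is `(−1)^{l−1} c_{l,0}`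
when `m = −1` and `0` otherwise. -/
theorem Flm_endpoint_values (l m : ℤ) (hl : 1 ≤ l) (hm₁ : -l ≤ m) (hm₂ : m ≤ l) :
    clm l 0 = Real.sqrt ((2 * (l : ℝ) + 1) / 2) ∧
    Filter.Tendsto (Flm l m) (nhdsWithin 1 (Set.Iio 1))
      (nhds (if m = 1 then Real.sqrt ((2 * (l : ℝ) + 1) / 2) else 0)) ∧
    Filter.Tendsto (Flm l m) (nhdsWithin (-1) (Set.Ioi (-1)))
      (nhds (if m = -1 then (-1 : ℝ) ^ (l - 1) * Real.sqrt ((2 * (l : ℝ) + 1) / 2)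
        else 0)) := by
  lift l to ℕ using by omega
  have hm : |m| ≤ l := abs_le.mpr ⟨hm₁, hm₂⟩
  rw [← clm_zero]
  exact ⟨rfl, tendsto_Flm_nhdsLT_one (by exact_mod_cast hl) hm,
    tendsto_Flm_nhdsGT_neg_one (by exact_mod_cast hl) hm⟩
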